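/- arXiv:1510.07720 — 2 statements merged into one kernel-verified Lean document; each statement's English description precedes it below -/
import Mathlib

section
/- Let V be a real 6-dimensional inner product space with real spinor space S (8-dimensional, with Clifford module structure and invariant inner product), and let ψ ∈ S be a unit spinor. Then the linear map from Λ⁰V ⊕ Λ¹V ⊕ Λ⁶V to S given by φ ↦ φ·ψ (Clifford multiplication) is an isometry, hence a linear isomorphism. -/
open RealInnerProductSpace

/-!
STATEMENT 2. Let V be a real 6-dimensional inner product space with real spinor space S
(8-dimensional, with Clifford module structure `cm` and invariant inner product), and let
ψ ∈ S be a unit spinor.  Then the linear map Λ⁰V ⊕ Λ¹V ⊕ Λ⁶V → S,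
φ ↦ φ·ψ, i.e. (a, v, b) ↦ a•ψ + v·ψ + b•Vol·ψ, is an isometry, hence a linear isomorphism.

`cm` is Clifford multiplication by vectors, `vol` is Clifford multiplication by the volume
element; the hypotheses say that Clifford multiplication by vectors is skew-adjoint with
v·v·s = -‖v‖²s, and record the standard properties of the volume element in dimension six.
-/
theorem spinor_decomposition_isometry
    {V S : Type*}
    [NormedAddCommGroup V] [InnerProductSpace ℝ V] [FiniteDimensional ℝ V]
    [NormedAddCommGroup S] [InnerProductSpace ℝ S] [FiniteDimensional ℝ S]
    (hV : Module.finrank ℝ V = 6) (hS : Module.finrank ℝ S = 8)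
    (cm : V →ₗ[ℝ] S →ₗ[ℝ] S)       -- Clifford multiplication by vectors
    (vol : S →ₗ[ℝ] S)               -- Clifford multiplication by the volume element
    (hskew : ∀ (v : V) (s t : S), ⟪cm v s, t⟫ = -⟪s, cm v t⟫)
    (hsq : ∀ (v : V) (s : S), cm v (cm v s) = -(‖v‖ ^ 2) • s)
    (hvolskew : ∀ s t : S, ⟪vol s, t⟫ = -⟪s, vol t⟫)
    (hvolsq : ∀ s : S, vol (vol s) = -s)
    (hvolcm : ∀ (v : V) (s : S), vol (cm v s) = -(cm v (vol s)))
    (ψ : S) (hψ : ‖ψ‖ = 1) :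
    (∀ (a b : ℝ) (v : V),
        ‖a • ψ + cm v ψ + b • vol ψ‖ ^ 2 = a ^ 2 + ‖v‖ ^ 2 + b ^ 2) ∧
      Function.Bijective
        (fun x : ℝ × V × ℝ => x.1 • ψ + cm x.2.1 ψ + x.2.2 • vol ψ) := by
  have hpp : ⟪ψ, ψ⟫ = (1:ℝ) := by
    rw [real_inner_self_eq_norm_sq, hψ]; norm_num
  have hcp : ∀ v : V, ⟪cm v ψ, ψ⟫ = 0 := by
    intro v
    have h1 := hskew v ψ ψ
    have h2 := real_inner_comm (cm v ψ) ψ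
    linarith
  have hvp : ⟪vol ψ, ψ⟫ = 0 := by
    have h1 := hvolskew ψ ψ
    have h2 := real_inner_comm (vol ψ) ψ
    linarith
  have hcv : ∀ v : V, ⟪cm v ψ, vol ψ⟫ = 0 := by
    intro v
    have h1 := hskew v ψ (vol ψ)
    have h2 := hvolskew ψ (cm v ψ)
    have h3 := hvolcm v ψ
    have h4 := hskew v (vol ψ) ψ
    have h5 : ⟪vol (cm v ψ), ψ⟫ = ⟪-(cm v (vol ψ)), ψ⟫ := by rw [h3]
    rw [inner_neg_left] at h5
    have h6 := real_inner_comm (vol (cm v ψ)) ψ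
    have h7 := real_inner_comm (cm v (vol ψ)) ψ
    have h8 := real_inner_comm (cm v ψ) (vol ψ)
    have h9 := real_inner_comm ψ (vol (cm v ψ))
    linarith [hvolskew (cm v ψ) ψ]
  have hcc : ∀ v : V, ⟪cm v ψ, cm v ψ⟫ = ‖v‖ ^ 2 := by
    intro v
    have h1 := hskew v ψ (cm v ψ)
    have h2 := real_inner_comm (cm v ψ) ψ
    have h3 : ⟪ψ, cm v (cm v ψ)⟫ = ⟪ψ, -(‖v‖ ^ 2) • ψ⟫ := by rw [hsq]
    rw [real_inner_smul_right] at h3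
    have h4 := hskew v ψ (cm v ψ)
    have h5 := real_inner_comm (cm v ψ) (cm v ψ)
    nlinarith [hpp]
  have hvv : ⟪vol ψ, vol ψ⟫ = (1:ℝ) := by
    have h1 := hvolskew ψ (vol ψ)
    have h3 : ⟪ψ, vol (vol ψ)⟫ = ⟪ψ, -ψ⟫ := by rw [hvolsq]
    rw [inner_neg_right] at h3
    linarith
  have key : ∀ (a b : ℝ) (v : V),
      ‖a • ψ + cm v ψ + b • vol ψ‖ ^ 2 = a ^ 2 + ‖v‖ ^ 2 + b ^ 2 := by
    intro a b v
    rw [← real_inner_self_eq_norm_sq]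
    simp only [inner_add_left, inner_add_right, real_inner_smul_left, real_inner_smul_right]
    have e1 : ⟪ψ, cm v ψ⟫ = 0 := by rw [real_inner_comm]; exact hcp v
    have e2 : ⟪ψ, vol ψ⟫ = 0 := by rw [real_inner_comm]; exact hvp
    have e3 : ⟪vol ψ, cm v ψ⟫ = 0 := by rw [real_inner_comm]; exact hcv v
    rw [e1, e2, e3, hpp, hvp, hvv, hcp v, hcc v, hcv v]
    ring
  refine ⟨key, ?_⟩
  let L : ℝ × V × ℝ →ₗ[ℝ] S :=
    { toFun := fun x => x.1 • ψ + cm x.2.1 ψ + x.2.2 • vol ψ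
      map_add' := by
        intro x y
        simp only [Prod.fst_add, Prod.snd_add, map_add, LinearMap.add_apply, add_smul]
        abel
      map_smul' := by
        intro c x
        simp only [Prod.smul_fst, Prod.smul_snd, smul_eq_mul, map_smul,
          LinearMap.smul_apply, RingHom.id_apply, smul_add, mul_smul]
        try abel }
  have hinj : Function.Injective L := by
    rw [← LinearMap.ker_eq_bot, LinearMap.ker_eq_bot']
    rintro ⟨a, v, b⟩ hx
    have h0 : ‖a • ψ + cm v ψ + b • vol ψ‖ ^ 2 = 0 := by
      have : L (a, v, b) = a • ψ + cm v ψ + b • vol ψ := rfl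
      rw [this] at hx
      rw [hx]; simp
    rw [key a b v] at h0
    have ha : a = 0 := by nlinarith [sq_nonneg a, sq_nonneg b, sq_nonneg ‖v‖, norm_nonneg v]
    have hb : b = 0 := by nlinarith [sq_nonneg a, sq_nonneg b, sq_nonneg ‖v‖, norm_nonneg v]
    have hv : v = 0 := by
      have : ‖v‖ ^ 2 = 0 := by nlinarith [sq_nonneg a, sq_nonneg b]
      have := pow_eq_zero_iff (n := 2) (by norm_num) |>.mp this
      simpa using this
    simp [ha, hb, hv, Prod.ext_iff]
  have hdim : Module.finrank ℝ (ℝ × V × ℝ) = Module.finrank ℝ S := by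
    simp [Module.finrank_prod, hV, hS]
  have hsurj : Function.Surjective L :=
    (LinearMap.injective_iff_surjective_of_finrank_eq_finrank hdim).mp hinj
  exact ⟨hinj, hsurj⟩
end

section
/- For g₂ with the bilinear form B(X,Y) = -(1/12)Tr(ad X ∘ ad Y), the Casimir acts on the irreducible representation with highest weight m₁λ₁ + m₂λ₂ as -(m₁² + 3m₂² + 3m₁m₂ + 5m₁ + 9m₂). In particular -9 is not an eigenvalue of Cas_{g₂} on any irreducible representation, i.e. m₁² + 3m₂² + 3m₁m₂ + 5m₁ + 9m₂ = 9 has no solution in nonnegative integers m₁, m₂. -/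
/-- The bilinear form B(X,Y) = -(1/12)Tr(ad X ∘ ad Y) of g₂ on the weight space, in the
basis of fundamental weights λ₁, λ₂: B(λ₁,λ₁) = -1, B(λ₁,λ₂) = -3/2, B(λ₂,λ₂) = -3. -/
noncomputable def Bg2 (x y : ℝ × ℝ) : ℝ :=
  -(x.1 * y.1) - 3 * (x.2 * y.2) - (3 / 2) * (x.1 * y.2 + x.2 * y.1)

/-!
STATEMENT 16. For g₂ with B(X,Y) = -(1/12)Tr(ad X ∘ ad Y), the Casimir acts on the
irreducible representation with highest weight m₁λ₁ + m₂λ₂ as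
-(m₁² + 3m₂² + 3m₁m₂ + 5m₁ + 9m₂) (Freudenthal: eigenvalue = B(λ,λ) + 2B(λ,δ),
δ = λ₁ + λ₂ = (1,1)).  In particular -9 is not a Casimir eigenvalue on any irreducible
representation: m₁² + 3m₂² + 3m₁m₂ + 5m₁ + 9m₂ = 9 has no solution in ℕ.
-/
theorem casimir_g2_eigenvalue_and_no_minus_nine :
    (∀ m₁ m₂ : ℕ,
      Bg2 ((m₁ : ℝ), (m₂ : ℝ)) ((m₁ : ℝ), (m₂ : ℝ))
          + 2 * Bg2 ((m₁ : ℝ), (m₂ : ℝ)) (1, 1)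
        = -((m₁ : ℝ) ^ 2 + 3 * (m₂ : ℝ) ^ 2 + 3 * m₁ * m₂ + 5 * m₁ + 9 * m₂)) ∧
    (∀ m₁ m₂ : ℕ, m₁ ^ 2 + 3 * m₂ ^ 2 + 3 * m₁ * m₂ + 5 * m₁ + 9 * m₂ ≠ 9) := by
  constructor
  · intro m₁ m₂
    simp only [Bg2]
    ring
  · intro m₁ m₂ h
    have h1 : m₁ ≤ 1 := by nlinarith
    have h2 : m₂ ≤ 1 := by nlinarith
    interval_cases m₁ <;> interval_cases m₂ <;> omega
end
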